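/- For every finite simple graph G with at least 3 vertices, no connected component isomorphic to K₂, and at most one isolated vertex, Dist′(μ(G)) ≤ Dist′(G). -/

import Mathlib

open SimpleGraph

universe u

/-- A distinguishing edge coloring: no nontrivial automorphism preserves the coloring. -/
def IsDistEdgeColoring {V : Type u} (G : SimpleGraph V) {C : Type*} (c : G.edgeSet → C) : Prop :=
  ∀ φ : G ≃g G, (∀ e : G.edgeSet, c (φ.mapEdgeSet e) = c e) → ∀ v, φ v = v

/-- The distinguishing index: least number of colors in a distinguishing edge coloring. -/
noncomputable def distIndex {V : Type u} (G : SimpleGraph V) : ℕ :=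
  sInf {k : ℕ | ∃ c : G.edgeSet → Fin k, IsDistEdgeColoring G c}

/-- The star `K_{1,m}` with center `0`. -/
def starGraph (m : ℕ) : SimpleGraph (Fin (m + 1)) :=
  SimpleGraph.fromRel fun a _ => a = 0

/-- The Mycielskian: `Sum.inl a` are original vertices, `Sum.inr (Sum.inl a)` their
shadows, and `Sum.inr (Sum.inr _)` the root. -/
def myc {V : Type u} (G : SimpleGraph V) : SimpleGraph (V ⊕ V ⊕ PUnit.{u+1}) :=
  SimpleGraph.fromRel fun x y =>
    match x, y with
    | Sum.inl a, Sum.inl b => G.Adj a b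
    | Sum.inl a, Sum.inr (Sum.inl b) => G.Adj a b
    | Sum.inr (Sum.inl _), Sum.inr (Sum.inr _) => True
    | _, _ => False

/-- The generalized Mycielskian with `t` extra levels: `Sum.inl (j, a)` is the level-`j`
copy of vertex `a` (level `0` being the original vertices), and `Sum.inr _` is the root. -/
def genMyc {V : Type u} (G : SimpleGraph V) (t : ℕ) :
    SimpleGraph ((Fin (t + 1) × V) ⊕ PUnit.{u+1}) :=
  SimpleGraph.fromRel fun x y =>
    match x, y with
    | Sum.inl (j, a), Sum.inl (k, b) =>
        ((j.val = 0 ∧ k.val = 0) ∨ k.val = j.val + 1) ∧ G.Adj a b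
    | Sum.inl (j, _), Sum.inr _ => j.val = t
    | _, _ => False

namespace MycProof
variable {V : Type u} {G : SimpleGraph V}

abbrev MV (a : V) : V ⊕ V ⊕ PUnit.{u+1} := Sum.inl a
abbrev MU (a : V) : V ⊕ V ⊕ PUnit.{u+1} := Sum.inr (Sum.inl a)
abbrev MW {V : Type u} : V ⊕ V ⊕ PUnit.{u+1} := Sum.inr (Sum.inr PUnit.unit)

lemma adj_vv {a b : V} : (myc G).Adj (MV a) (MV b) ↔ G.Adj a b := by
  simp only [myc, fromRel_adj]
  constructor
  · rintro ⟨-, h | h⟩; exact h; exact h.symm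
  · intro h; exact ⟨by simp [h.ne], Or.inl h⟩

lemma adj_vu {a b : V} : (myc G).Adj (MV a) (MU b) ↔ G.Adj a b := by
  simp only [myc, fromRel_adj]
  constructor
  · rintro ⟨-, h | h⟩; exact h; exact h.elim
  · intro h; exact ⟨by simp, Or.inl h⟩

lemma adj_uv {a b : V} : (myc G).Adj (MU a) (MV b) ↔ G.Adj a b := by
  rw [adj_comm, adj_vu, G.adj_comm]

lemma adj_uw {a : V} : (myc G).Adj (MU a) (MW : V ⊕ V ⊕ PUnit.{u+1}) := by
  simp only [myc, fromRel_adj]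
  exact ⟨by simp, Or.inl trivial⟩

lemma adj_wu {a : V} : (myc G).Adj (MW : V ⊕ V ⊕ PUnit.{u+1}) (MU a) := adj_uw.symm

lemma not_adj_uu {a b : V} : ¬ (myc G).Adj (MU a) (MU b) := by
  simp only [myc, fromRel_adj]
  rintro ⟨-, h | h⟩ <;> exact h

lemma not_adj_vw {a : V} : ¬ (myc G).Adj (MV a) (MW : V ⊕ V ⊕ PUnit.{u+1}) := by
  simp only [myc, fromRel_adj]
  rintro ⟨-, h | h⟩ <;> exact h

lemma adj_w_iff {z : V ⊕ V ⊕ PUnit.{u+1}} :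
    (myc G).Adj z MW ↔ ∃ x, z = MU x := by
  constructor
  · intro h
    rcases z with a | a | u
    · exact absurd h not_adj_vw
    · exact ⟨a, rfl⟩
    · cases u; exact absurd h (myc G).irrefl
  · rintro ⟨x, rfl⟩; exact adj_uw

lemma adj_va_iff {a : V} {z : V ⊕ V ⊕ PUnit.{u+1}} :
    (myc G).Adj z (MV a) ↔ ∃ b, G.Adj a b ∧ (z = MV b ∨ z = MU b) := by
  constructor
  · intro h
    rcases z with x | x | u
    · exact ⟨x, (adj_vv.mp h).symm, Or.inl rfl⟩
    · exact ⟨x, (adj_uv.mp h).symm, Or.inr rfl⟩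
    · cases u; exact absurd h.symm not_adj_vw
  · rintro ⟨b, hb, rfl | rfl⟩
    · exact adj_vv.mpr hb.symm
    · exact adj_uv.mpr hb.symm

lemma adj_ua_iff {a : V} {z : V ⊕ V ⊕ PUnit.{u+1}} :
    (myc G).Adj z (MU a) ↔ (∃ b, G.Adj a b ∧ z = MV b) ∨ z = MW := by
  constructor
  · intro h
    rcases z with x | x | u
    · exact Or.inl ⟨x, (adj_vu.mp h).symm, rfl⟩
    · exact absurd h not_adj_uu
    · cases u; exact Or.inr rfl
  · rintro (⟨b, hb, rfl⟩ | rfl)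
    · exact adj_vu.mpr hb.symm
    · exact adj_wu

lemma MU_def (a : V) : Sum.inr (Sum.inl a) = (MU a : V ⊕ V ⊕ PUnit.{u+1}) := rfl
lemma MW_def (u : PUnit.{u+1}) : (Sum.inr (Sum.inr u) : V ⊕ V ⊕ PUnit.{u+1}) = MW := rfl

lemma three_distinct [Fintype V] (h3 : 3 ≤ Fintype.card V) :
    ∃ x1 x2 x3 : V, x1 ≠ x2 ∧ x1 ≠ x3 ∧ x2 ≠ x3 := by
  have : 2 < Finset.univ.card (α := V) := by rw [Finset.card_univ]; omega
  obtain ⟨a, b, c, -, -, -, h1, h2, h3⟩ := Finset.two_lt_card_iff.mp this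
  exact ⟨a, b, c, h1, h2, h3⟩

/-- An automorphism of the Mycielskian cannot send the root to an original vertex. -/
lemma no_w_to_v [Fintype V] (h3 : 3 ≤ Fintype.card V) (φ : myc G ≃g myc G) (a : V)
    (hw : φ MW = MV a) : False := by
  have hmap : ∀ x y, (myc G).Adj (φ x) (φ y) ↔ (myc G).Adj x y := fun x y => φ.map_adj_iff
  have h1 : ∀ x : V, (myc G).Adj (φ (MU x)) (MV a) := fun x => by
    have := (hmap (MU x) MW).mpr adj_uw
    rwa [hw] at this
  -- φ.symm (MU a) is an original vertex
  obtain ⟨y, hy⟩ : ∃ y, φ.symm (MU a) = MV y := by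
    rcases hp : φ.symm (MU a) with y | y | u
    · exact ⟨y, rfl⟩
    · exfalso
      rw [MU_def] at hp
      have h2 : φ (MU y) = MU a := by rw [← hp, φ.apply_symm_apply]
      have := (hmap (MU y) MW).mpr adj_uw
      rw [h2, hw] at this
      exact absurd (adj_uv.mp this) G.irrefl
    · exfalso
      cases u
      rw [MW_def] at hp
      have h2 := congrArg φ hp
      rw [φ.apply_symm_apply, hw] at h2
      simp at h2
  have hya : φ (MV y) = MU a := by rw [← hy, φ.apply_symm_apply]
  -- φ.symm MW is an original vertex
  obtain ⟨z, hz⟩ : ∃ z, φ.symm MW = MV z := by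
    rcases hp : φ.symm MW with z | z | u
    · exact ⟨z, rfl⟩
    · exfalso
      rw [MU_def] at hp
      have h2 : φ (MU z) = MW := by rw [← hp, φ.apply_symm_apply]
      have := (hmap (MU z) MW).mpr adj_uw
      rw [h2, hw] at this
      exact absurd this.symm not_adj_vw
    · exfalso
      cases u
      rw [MW_def] at hp
      have h2 := congrArg φ hp
      rw [φ.apply_symm_apply, hw] at h2
      simp at h2
  have hza : φ (MV z) = MW := by rw [← hz, φ.apply_symm_apply]
  -- every neighbor of y is sent to the root
  have hNy : ∀ x, G.Adj x y → φ (MV x) = MW := by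
    intro x hxy
    have hadj : (myc G).Adj (φ (MV x)) (MU a) := by
      rw [← hya]; exact (hmap _ _).mpr (adj_vv.mpr hxy)
    rcases adj_ua_iff.mp hadj with ⟨b, hab, hb⟩ | hW
    · exfalso
      have hnot : ¬ (myc G).Adj (φ (MV x)) (MV a) := by
        rw [← hw]; rw [hmap]; exact not_adj_vw
      rw [hb] at hnot
      exact hnot (adj_vv.mpr hab.symm)
    · exact hW
  -- every neighbor b of a satisfies φ (MU z) = MV b
  have hNa : ∀ b, G.Adj a b → φ (MU z) = MV b := by
    intro b hab
    obtain ⟨x, hx⟩ : ∃ x, φ.symm (MV b) = MU x := by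
      apply adj_w_iff.mp
      have h' : (myc G).Adj (φ (φ.symm (MV b))) (φ MW) := by
        rw [φ.apply_symm_apply, hw]; exact adj_vv.mpr hab.symm
      exact (hmap _ _).mp h'
    have hxb : φ (MU x) = MV b := by rw [← hx, φ.apply_symm_apply]
    have hxy : G.Adj x y := by
      have : (myc G).Adj (φ (MU x)) (φ (MV y)) := by
        rw [hxb, hya]; exact adj_vu.mpr hab.symm
      exact adj_uv.mp ((hmap _ _).mp this)
    have : MV x = MV z := φ.injective (by rw [hNy x hxy, hza])
    have hxz : x = z := by simpa using this
    rw [← hxz]; exact hxb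
  -- hence a has a unique neighbor b0
  have hne : Nonempty V := Fintype.card_pos_iff.mp (by omega)
  obtain ⟨b0, hb0⟩ : ∃ b, G.Adj a b := by
    rcases adj_va_iff.mp (h1 (Classical.arbitrary V)) with ⟨b, hab, -⟩
    exact ⟨b, hab⟩
  have huniq : ∀ b, G.Adj a b → b = b0 := fun b hb => by
    have : MV b = MV b0 := by rw [← hNa b hb, hNa b0 hb0]
    simpa using this
  -- pigeonhole: three distinct u's map into a two-element set
  have himg : ∀ x : V, φ (MU x) = MV b0 ∨ φ (MU x) = MU b0 := fun x => by
    rcases adj_va_iff.mp (h1 x) with ⟨b, hab, h | h⟩ <;> rw [huniq b hab] at h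
    · exact Or.inl h
    · exact Or.inr h
  have hinj : ∀ x x' : V, φ (MU x) = φ (MU x') → x = x' := fun x x' h => by
    have := φ.injective h
    simpa using this
  obtain ⟨x1, x2, x3, h12, h13, h23⟩ := three_distinct h3
  rcases himg x1 with ha1 | ha1 <;> rcases himg x2 with ha2 | ha2 <;>
    rcases himg x3 with ha3 | ha3 <;>
    first
      | exact h12 (hinj _ _ (ha1.trans ha2.symm))
      | exact h13 (hinj _ _ (ha1.trans ha3.symm))
      | exact h23 (hinj _ _ (ha2.trans ha3.symm))


section Color
variable [DecidableRel G.Adj] {k : ℕ}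

def colFun (c : G.edgeSet → Fin k) (α : Fin k) :
    (V ⊕ V ⊕ PUnit.{u+1}) → (V ⊕ V ⊕ PUnit.{u+1}) → Fin k
  | Sum.inl a, Sum.inl b => if h : G.Adj a b then c ⟨s(a,b), h⟩ else α
  | Sum.inl a, Sum.inr (Sum.inl b) => if h : G.Adj a b then c ⟨s(a,b), h⟩ else α
  | Sum.inr (Sum.inl b), Sum.inl a => if h : G.Adj a b then c ⟨s(a,b), h⟩ else α
  | _, _ => α

set_option linter.unusedSectionVars false in
lemma c_swap (c : G.edgeSet → Fin k) {a b : V} (h : G.Adj a b) :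
    c ⟨s(a,b), h⟩ = c ⟨s(b,a), h.symm⟩ := by
  congr 1; exact Subtype.ext Sym2.eq_swap

lemma colFun_symm (c : G.edgeSet → Fin k) (α : Fin k) :
    ∀ x y, colFun c α x y = colFun c α y x := by
  rintro (a | a | u) (b | b | u') <;> simp only [colFun]
  · by_cases h : G.Adj a b
    · rw [dif_pos h, dif_pos h.symm]; exact c_swap c h
    · rw [dif_neg h, dif_neg (fun h' => h h'.symm)]

def cc (c : G.edgeSet → Fin k) (α : Fin k) : Sym2 (V ⊕ V ⊕ PUnit.{u+1}) → Fin k :=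
  Sym2.lift ⟨colFun c α, colFun_symm c α⟩

lemma cc_vv (c : G.edgeSet → Fin k) (α : Fin k) {a b : V} (h : G.Adj a b) :
    cc c α s(MV a, MV b) = c ⟨s(a,b), h⟩ := by
  simp only [cc, Sym2.lift_mk, colFun, dif_pos h]

lemma cc_vu (c : G.edgeSet → Fin k) (α : Fin k) {a b : V} (h : G.Adj a b) :
    cc c α s(MV a, MU b) = c ⟨s(a,b), h⟩ := by
  simp only [cc, Sym2.lift_mk, colFun, dif_pos h]

lemma cc_uw (c : G.edgeSet → Fin k) (α : Fin k) {a : V} :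
    cc c α s(MU a, (MW : V ⊕ V ⊕ PUnit.{u+1})) = α := by
  simp only [cc, Sym2.lift_mk, colFun]

/-- An automorphism preserving the coloring cannot send the root to a shadow vertex. -/
lemma no_w_to_u [Fintype V] (h3 : 3 ≤ Fintype.card V)
    (c : G.edgeSet → Fin k) (α : Fin k) (hc : IsDistEdgeColoring G c)
    (φ : myc G ≃g myc G)
    (key : ∀ p q, (myc G).Adj p q → cc c α s(φ p, φ q) = cc c α s(p, q))
    (a : V) (hw : φ MW = MU a) : False := by
  classical
  have hmap : ∀ x y, (myc G).Adj (φ x) (φ y) ↔ (myc G).Adj x y := fun x y => φ.map_adj_iff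
  have hpre : ∀ b, G.Adj a b → ∃ x, φ (MU x) = MV b := by
    intro b hab
    obtain ⟨x, hx⟩ : ∃ x, φ.symm (MV b) = MU x := by
      apply adj_w_iff.mp
      have h' : (myc G).Adj (φ (φ.symm (MV b))) (φ MW) := by
        rw [φ.apply_symm_apply, hw]; exact adj_vu.mpr hab.symm
      exact (hmap _ _).mp h'
    exact ⟨x, by rw [← hx, φ.apply_symm_apply]⟩
  have hind : ∀ b b', G.Adj a b → G.Adj a b' → ¬ G.Adj b b' := by
    intro b b' hb hb' hbb
    obtain ⟨x, hx⟩ := hpre b hb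
    obtain ⟨x', hx'⟩ := hpre b' hb'
    have : (myc G).Adj (φ (MU x)) (φ (MU x')) := by rw [hx, hx']; exact adj_vv.mpr hbb
    exact not_adj_uu ((hmap _ _).mp this)
  have huniv : ∀ x, x ≠ a → G.Adj a x := by
    by_contra hcon; push_neg at hcon
    obtain ⟨x0, hx0ne, hx0⟩ := hcon
    have hcomp : ∀ t, t ≠ MU a → ¬ (myc G).Adj t (MU a) → ∃ y, φ.symm t = MV y := by
      intro t ht hnadj
      rcases hp : φ.symm t with y | y | u
      · exact ⟨y, rfl⟩
      · exfalso
        rw [MU_def] at hp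
        have h2 := congrArg φ hp
        rw [φ.apply_symm_apply] at h2
        have h4 := (hmap (MU y) MW).mpr adj_uw
        rw [← h2, hw] at h4
        exact hnadj h4
      · exfalso
        cases u
        rw [MW_def] at hp
        have h2 := congrArg φ hp
        rw [φ.apply_symm_apply, hw] at h2
        exact ht h2
    have hj : ∀ z : V, z ≠ a → ∃ y, φ.symm (MU z) = MV y := fun z hz =>
      hcomp (MU z) (by simp [hz]) not_adj_uu
    choose j hjs using hj
    obtain ⟨y0, hy0⟩ := hcomp (MV x0) (by simp) (fun h => hx0 (adj_vu.mp h).symm)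
    obtain ⟨y2, hy2⟩ := hcomp (MV a) (by simp) (fun h => G.irrefl (adj_vu.mp h))
    classical
    set F : V → V := fun z => if h : z = a then y0 else j z h with hF
    have hFinj : Function.Injective F := by
      intro z1 z2 h
      by_cases h1 : z1 = a <;> by_cases h2 : z2 = a
      · rw [h1, h2]
      · exfalso
        rw [hF] at h; simp only [dif_pos h1, dif_neg h2] at h
        have h' : φ.symm (MV x0) = φ.symm (MU z2) := by rw [hy0, hjs z2 h2, h]
        have := φ.symm.injective h'
        simp at this
      · exfalso
        rw [hF] at h; simp only [dif_neg h1, dif_pos h2] at h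
        have h' : φ.symm (MV x0) = φ.symm (MU z1) := by rw [hy0, hjs z1 h1, h]
        have := φ.symm.injective h'
        simp at this
      · rw [hF] at h; simp only [dif_neg h1, dif_neg h2] at h
        have h' : φ.symm (MU z1) = φ.symm (MU z2) := by rw [hjs z1 h1, hjs z2 h2, h]
        have := φ.symm.injective h'
        simpa using this
    obtain ⟨z, hz⟩ := Finite.injective_iff_surjective.mp hFinj y2
    by_cases h1 : z = a
    · rw [hF] at hz; simp only [dif_pos h1] at hz
      have h' : φ.symm (MV x0) = φ.symm (MV a) := by rw [hy0, hy2, hz]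
      have := φ.symm.injective h'
      simp only [Sum.inl.injEq] at this
      exact hx0ne this
    · rw [hF] at hz; simp only [dif_neg h1] at hz
      have h' : φ.symm (MU z) = φ.symm (MV a) := by rw [hjs z h1, hy2, hz]
      have := φ.symm.injective h'
      simp at this
  have hcol : ∀ b (hb : G.Adj a b), c ⟨s(a,b), hb⟩ = α := by
    intro b hb
    obtain ⟨x, hx⟩ := hpre b hb
    have hk := key (MU x) MW adj_uw
    rw [hx, hw, cc_uw, cc_vu c α hb.symm] at hk
    rw [c_swap c hb]; exact hk
  have hadjiff : ∀ x y : V, G.Adj x y ↔ ((x = a ∧ y ≠ a) ∨ (y = a ∧ x ≠ a)) := by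
    intro x y
    constructor
    · intro hxy
      by_cases hx : x = a
      · refine Or.inl ⟨hx, ?_⟩
        rintro rfl; rw [hx] at hxy; exact G.irrefl hxy
      · by_cases hy : y = a
        · exact Or.inr ⟨hy, hx⟩
        · exact absurd hxy (hind x y (huniv x hx) (huniv y hy))
    · rintro (⟨rfl, hy⟩ | ⟨rfl, hx⟩)
      · exact huniv y hy
      · exact (huniv x hx).symm
  obtain ⟨x1, x2, x3, h12, h13, h23⟩ := three_distinct h3
  obtain ⟨l, l', hll, hla, hl'a⟩ : ∃ l l' : V, l ≠ l' ∧ l ≠ a ∧ l' ≠ a := by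
    by_cases e1 : x1 = a
    · subst e1; exact ⟨x2, x3, h23, Ne.symm h12, Ne.symm h13⟩
    · by_cases e2 : x2 = a
      · subst e2; exact ⟨x1, x3, h13, e1, Ne.symm h23⟩
      · exact ⟨x1, x2, h12, e1, e2⟩
  have hswapa : Equiv.swap l l' a = a :=
    Equiv.swap_apply_of_ne_of_ne (Ne.symm hla) (Ne.symm hl'a)
  have hfix : ∀ t : V, Equiv.swap l l' t = a ↔ t = a := by
    intro t
    constructor
    · intro h
      have := (Equiv.swap l l').injective (h.trans hswapa.symm)
      exact this
    · rintro rfl; exact hswapa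
  have hσ : ∀ x y : V, G.Adj (Equiv.swap l l' x) (Equiv.swap l l' y) ↔ G.Adj x y := by
    intro x y
    rw [hadjiff, hadjiff x y]
    simp only [ne_eq, hfix]
  let σiso : G ≃g G := { toEquiv := Equiv.swap l l', map_rel_iff' := hσ _ _ }
  have hall : ∀ e : G.edgeSet, c e = α := by
    rintro ⟨e, he⟩
    induction e using Sym2.ind with
    | _ x y =>
      have hxy : G.Adj x y := G.mem_edgeSet.mp he
      rcases (hadjiff x y).mp hxy with ⟨hx, hy⟩ | ⟨hy, hx⟩
      · subst hx; exact hcol y hxy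
      · subst hy; rw [c_swap c hxy]; exact hcol x hxy.symm
  have hfixl := hc σiso (fun e => by rw [hall, hall]) l
  have : Equiv.swap l l' l = l := hfixl
  rw [Equiv.swap_apply_left] at this
  exact hll this.symm


lemma mapEdgeSet_pair {W : Type u} {H : SimpleGraph W} (ψ : H ≃g H) {x y : W} (h : H.Adj x y) :
    ψ.mapEdgeSet ⟨s(x,y), h⟩ = ⟨s(ψ x, ψ y), ψ.map_adj_iff.mpr h⟩ := by
  apply Subtype.ext
  simp [Sym2.map_pair_eq]

lemma exists_dist_myc [Fintype V] (h3 : 3 ≤ Fintype.card V)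
    (c : G.edgeSet → Fin k) (hc : IsDistEdgeColoring G c)
    (hedge : ∃ a b, G.Adj a b) :
    ∃ c' : (myc G).edgeSet → Fin k, IsDistEdgeColoring (myc G) c' := by
  obtain ⟨a0, b0, hab0⟩ := hedge
  set α : Fin k := c ⟨s(a0,b0), hab0⟩ with hα
  refine ⟨fun e => cc c α e.val, ?_⟩
  intro φ hφ
  have key : ∀ p q, (myc G).Adj p q → cc c α s(φ p, φ q) = cc c α s(p, q) := by
    intro p q h
    have h2 := hφ ⟨s(p,q), h⟩
    have h3 : ((φ.mapEdgeSet ⟨s(p,q), h⟩ : (myc G).edgeSet) : Sym2 (V ⊕ V ⊕ PUnit.{u+1})) =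
        s(φ p, φ q) := by simp [Sym2.map_pair_eq]
    simp only [h3] at h2
    exact h2
  have hmap : ∀ x y, (myc G).Adj (φ x) (φ y) ↔ (myc G).Adj x y := fun x y => φ.map_adj_iff
  have hw : φ MW = MW := by
    rcases hp : φ MW with a | a | u
    · exact (no_w_to_v h3 φ a hp).elim
    · exact (no_w_to_u h3 c α hc φ key a hp).elim
    · cases u; rfl
  have hU : ∀ x : V, ∃ y, φ (MU x) = MU y := by
    intro x
    have h1 : (myc G).Adj (φ (MU x)) MW := by rw [← hw]; exact (hmap _ _).mpr adj_uw
    exact adj_w_iff.mp h1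
  have hV : ∀ x : V, ∃ y, φ (MV x) = MV y := by
    intro x
    rcases hp : φ (MV x) with y | y | u
    · exact ⟨y, rfl⟩
    · exfalso
      rw [MU_def] at hp
      have h1 : (myc G).Adj (φ (MV x)) MW := by rw [hp]; exact adj_uw
      rw [← hw] at h1
      exact not_adj_vw ((hmap _ _).mp h1)
    · exfalso
      cases u
      rw [MW_def] at hp
      have := φ.injective (hp.trans hw.symm)
      simp at this
  choose σ hσ using hV
  choose τ hτ using hU
  have hσadj : ∀ x y, G.Adj (σ x) (σ y) ↔ G.Adj x y := by
    intro x y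
    rw [← adj_vv (G := G), ← hσ x, ← hσ y, hmap, adj_vv]
  have hσinj : Function.Injective σ := by
    intro x y h
    have h1 : φ (MV x) = φ (MV y) := by rw [hσ x, hσ y, h]
    simpa using φ.injective h1
  let σiso : G ≃g G :=
    { toEquiv := Equiv.ofBijective σ (Finite.injective_iff_bijective.mp hσinj),
      map_rel_iff' := hσadj _ _ }
  have hσcol : ∀ e : G.edgeSet, c (σiso.mapEdgeSet e) = c e := by
    rintro ⟨e, he⟩
    induction e using Sym2.ind with
    | _ x y =>
      have hxy : G.Adj x y := G.mem_edgeSet.mp he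
      have hk := key (MV x) (MV y) (adj_vv.mpr hxy)
      rw [hσ x, hσ y, cc_vv c α ((hσadj x y).mpr hxy), cc_vv c α hxy] at hk
      rw [mapEdgeSet_pair σiso hxy]
      exact hk
  have hσid : ∀ x, σ x = x := hc σiso hσcol
  have hφv : ∀ x, φ (MV x) = MV x := fun x => by rw [hσ x, hσid x]
  have hτadj : ∀ x y, G.Adj x (τ y) ↔ G.Adj x y := by
    intro x y
    have h1 : (myc G).Adj (MV x) (MU (τ y)) ↔ (myc G).Adj (MV x) (MU y) := by
      conv_lhs => rw [← hφv x, ← hτ y]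
      exact hmap (MV x) (MU y)
    rw [← adj_vu (G := G), ← adj_vu (G := G) (a := x) (b := y)]
    exact h1
  have hτinj : Function.Injective τ := by
    intro x y h
    have h1 : φ (MU x) = φ (MU y) := by rw [hτ x, hτ y, h]
    simpa using φ.injective h1
  have hτadj2 : ∀ x y, G.Adj (τ x) (τ y) ↔ G.Adj x y := by
    intro x y
    rw [hτadj, G.adj_comm, hτadj, G.adj_comm]
  let τiso : G ≃g G :=
    { toEquiv := Equiv.ofBijective τ (Finite.injective_iff_bijective.mp hτinj),
      map_rel_iff' := hτadj2 _ _ }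
  have rule : ∀ x y (h : G.Adj x y), c ⟨s(x, τ y), (hτadj x y).mpr h⟩ = c ⟨s(x,y), h⟩ := by
    intro x y h
    have hk := key (MV x) (MU y) (adj_vu.mpr h)
    rw [hφv x, hτ y, cc_vu c α ((hτadj x y).mpr h), cc_vu c α h] at hk
    exact hk
  have hτcol : ∀ e : G.edgeSet, c (τiso.mapEdgeSet e) = c e := by
    rintro ⟨e, he⟩
    induction e using Sym2.ind with
    | _ x y =>
      have hxy : G.Adj x y := G.mem_edgeSet.mp he
      rw [mapEdgeSet_pair τiso hxy]
      have h1 : G.Adj (τ x) y := by rw [G.adj_comm, hτadj]; exact hxy.symm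
      calc c ⟨s(τ x, τ y), (hτadj2 x y).mpr hxy⟩
          = c ⟨s(τ x, y), h1⟩ := rule (τ x) y h1
        _ = c ⟨s(y, τ x), h1.symm⟩ := c_swap c h1
        _ = c ⟨s(y, x), hxy.symm⟩ := rule y x hxy.symm
        _ = c ⟨s(x, y), hxy⟩ := (c_swap c hxy).symm
  have hτid : ∀ x, τ x = x := hc τiso hτcol
  intro z
  rcases z with x | x | u
  · exact hφv x
  · rw [hτ x, hτid x]
  · cases u; exact hw


lemma exists_edge [Fintype V] (hcard : 3 ≤ Fintype.card V)
    (hiso : ∀ x y : V, G.degree x = 0 → G.degree y = 0 → x = y) :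
    ∃ a b, G.Adj a b := by
  by_contra h
  push_neg at h
  have hdeg0 : ∀ x, G.degree x = 0 := by
    intro x
    rw [← G.card_neighborFinset_eq_degree]
    refine Finset.card_eq_zero.mpr (Finset.eq_empty_iff_forall_notMem.mpr ?_)
    intro y hy
    exact h x y ((G.mem_neighborFinset x y).mp hy)
  have hall : ∀ x y : V, x = y := fun x y => hiso x y (hdeg0 x) (hdeg0 y)
  have := Fintype.card_le_one_iff.mpr hall
  omega

lemma exists_dist_base [Fintype V] (hcard : 3 ≤ Fintype.card V)
    (hK2 : ∀ x y : V, G.Adj x y → ¬(G.degree x = 1 ∧ G.degree y = 1))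
    (hiso : ∀ x y : V, G.degree x = 0 → G.degree y = 0 → x = y) :
    ∃ k, ∃ c : G.edgeSet → Fin k, IsDistEdgeColoring G c := by
  classical
  haveI : Fintype G.edgeSet := Fintype.ofFinite _
  refine ⟨Fintype.card G.edgeSet, Fintype.equivFin G.edgeSet, ?_⟩
  intro φ hφ
  have hfixe : ∀ x y, G.Adj x y → s(φ x, φ y) = s(x, y) := by
    intro x y h
    have h2 := (Fintype.equivFin G.edgeSet).injective (hφ ⟨s(x,y), h⟩)
    rw [mapEdgeSet_pair φ h] at h2
    exact congrArg Subtype.val h2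
  have hdeg2 : ∀ v, 2 ≤ G.degree v → φ v = v := by
    intro v hv
    have hlt : 1 < (G.neighborFinset v).card := by
      rw [G.card_neighborFinset_eq_degree]; omega
    obtain ⟨a, ha, b, hb, hab⟩ := Finset.one_lt_card.mp hlt
    have hva : G.Adj v a := (G.mem_neighborFinset v a).mp ha
    have hvb : G.Adj v b := (G.mem_neighborFinset v b).mp hb
    have h1 := hfixe v a hva
    have h2 := hfixe v b hvb
    rw [Sym2.eq_iff] at h1 h2
    rcases h1 with ⟨h, -⟩ | ⟨h1a, h1b⟩
    · exact h
    · rcases h2 with ⟨h, -⟩ | ⟨h2a, h2b⟩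
      · exact h
      · exact absurd (h1a.symm.trans h2a) hab
  intro v
  rcases Nat.lt_or_ge (G.degree v) 2 with hlt | hge
  · by_cases h0 : G.degree v = 0
    · have hφdeg : G.degree (φ v) = 0 := by
        by_contra hne
        obtain ⟨y, hy⟩ := (G.degree_pos_iff_exists_adj (φ v)).mp (Nat.pos_of_ne_zero hne)
        have hadj : G.Adj v (φ.symm y) := by
          have h2 := hy
          rw [← φ.apply_symm_apply y] at h2
          exact φ.map_adj_iff.mp h2
        have := (G.degree_pos_iff_exists_adj v).mpr ⟨_, hadj⟩
        omega
      exact hiso (φ v) v hφdeg h0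
    · have h1 : G.degree v = 1 := by omega
      obtain ⟨a, hva⟩ := (G.degree_pos_iff_exists_adj v).mp (by omega)
      have hda : G.degree a ≠ 1 := fun h => hK2 v a hva ⟨h1, h⟩
      have hda0 : 0 < G.degree a := (G.degree_pos_iff_exists_adj a).mpr ⟨v, hva.symm⟩
      have hfa : φ a = a := hdeg2 a (by omega)
      have h2 := hfixe v a hva
      rw [hfa, Sym2.eq_iff] at h2
      rcases h2 with ⟨h, -⟩ | ⟨-, h2b⟩
      · exact h
      · exact absurd h2b.symm hva.ne
  · exact hdeg2 v hge

end Color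
end MycProof

theorem distIndex_myc_le {V : Type u} [Fintype V] (G : SimpleGraph V)
    [DecidableRel G.Adj] (hcard : 3 ≤ Fintype.card V)
    (hK2 : ∀ x y : V, G.Adj x y → ¬(G.degree x = 1 ∧ G.degree y = 1))
    (hiso : ∀ x y : V, G.degree x = 0 → G.degree y = 0 → x = y) :
    distIndex (myc G) ≤ distIndex G := by
  classical
  have hedge := MycProof.exists_edge hcard hiso
  obtain ⟨k0, c0, hc0⟩ := MycProof.exists_dist_base hcard hK2 hiso
  have hne : {k : ℕ | ∃ c : G.edgeSet → Fin k, IsDistEdgeColoring G c}.Nonempty := ⟨k0, c0, hc0⟩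
  have hmem : ∃ c : G.edgeSet → Fin (distIndex G), IsDistEdgeColoring G c := Nat.sInf_mem hne
  obtain ⟨c, hc⟩ := hmem
  obtain ⟨c', hc'⟩ := MycProof.exists_dist_myc hcard c hc hedge
  exact Nat.sInf_le ⟨c', hc'⟩
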